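/- arXiv:1303.1434 — 3 statements merged into one kernel-verified Lean document; each statement's English description precedes it below -/
import Mathlib

section
/- In the wind turbine graph on n ≥ 4 vertices—with center vertex 0 adjacent to all vertices except vertex 2, vertex 1 adjacent to vertices 0 and 2—the cost (sum of distances to all others) of vertex 0 is n-1 and the cost of each vertex b ∈ {3, ..., n-1} is 2n-3, so the ratio of maximum to minimum vertex cost is (2n-3)/(n-1), which is strictly less than 2. -/
/-- The wind turbine graph on `{0, 1, …, n-1}`: vertex `0` is adjacent to every other
vertex, and additionally `{1,2}` is an edge. -/
def windTurbine (n : ℕ) : SimpleGraph (Fin n) :=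
  SimpleGraph.fromRel (fun i j => (i : ℕ) = 0 ∨ ((i : ℕ) = 1 ∧ (j : ℕ) = 2))

section aux
variable {n : ℕ}

lemma wt_adj_iff (i j : Fin n) :
    (windTurbine n).Adj i j ↔ i ≠ j ∧ ((i : ℕ) = 0 ∨ (j : ℕ) = 0 ∨
      ((i : ℕ) = 1 ∧ (j : ℕ) = 2) ∨ ((j : ℕ) = 1 ∧ (i : ℕ) = 2)) := by
  simp [windTurbine, SimpleGraph.fromRel_adj]
  tauto

lemma wt_adj_zero {i j : Fin n} (h : (i : ℕ) = 0) (hne : i ≠ j) :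
    (windTurbine n).Adj i j := by
  rw [wt_adj_iff]; exact ⟨hne, Or.inl h⟩

lemma wt_connected (hn : 1 ≤ n) : (windTurbine n).Connected := by
  have v0 : Fin n := ⟨0, hn⟩
  rw [SimpleGraph.connected_iff_exists_forall_reachable]
  refine ⟨⟨0, hn⟩, fun v => ?_⟩
  by_cases h : (⟨0, hn⟩ : Fin n) = v
  · exact h ▸ SimpleGraph.Reachable.refl _
  · exact (wt_adj_zero rfl h).reachable

lemma wt_dist_le_two (hn : 1 ≤ n) (i j : Fin n) : (windTurbine n).dist i j ≤ 2 := by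
  have hc := wt_connected hn
  set v0 : Fin n := ⟨0, hn⟩
  have h1 : ∀ k : Fin n, (windTurbine n).dist v0 k ≤ 1 := by
    intro k
    by_cases h : v0 = k
    · rw [← h, SimpleGraph.dist_self]; omega
    · rw [(SimpleGraph.dist_eq_one_iff_adj).mpr (wt_adj_zero rfl h)]
  have h2 : ∀ k : Fin n, (windTurbine n).dist k v0 ≤ 1 := by
    intro k; rw [SimpleGraph.dist_comm]; exact h1 k
  calc (windTurbine n).dist i j ≤ (windTurbine n).dist i v0 + (windTurbine n).dist v0 j :=
        hc.dist_triangle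
    _ ≤ 1 + 1 := Nat.add_le_add (h2 i) (h1 j)

lemma wt_dist_eq_two (hn : 1 ≤ n) {i j : Fin n} (hi : 3 ≤ (i : ℕ)) (hj : (j : ℕ) ≠ 0)
    (hne : i ≠ j) : (windTurbine n).dist i j = 2 := by
  have hc := wt_connected hn
  have hpos := hc.pos_dist_of_ne hne
  have hnadj : ¬ (windTurbine n).Adj i j := by
    rw [wt_adj_iff]; omega
  have h1 : (windTurbine n).dist i j ≠ 1 := fun h =>
    hnadj (SimpleGraph.dist_eq_one_iff_adj.mp h)
  have := wt_dist_le_two hn i j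
  omega

end aux

/-- in the wind turbine graph on `n ≥ 4` vertices, the cost (sum of
distances to all others) of vertex `0` is `n-1` and the cost of each vertex
`b ∈ {3,…,n-1}` is `2n-3`; the ratio of maximum to minimum vertex cost is
`(2n-3)/(n-1)`, which is strictly less than 2. -/
theorem windTurbine_costs (n : ℕ) (hn : 4 ≤ n) :
    (∑ j : Fin n, (windTurbine n).dist ⟨0, by omega⟩ j = n - 1) ∧
    (∀ b : Fin n, 3 ≤ (b : ℕ) → ∑ j : Fin n, (windTurbine n).dist b j = 2 * n - 3) ∧
    (∀ i : Fin n, n - 1 ≤ ∑ j : Fin n, (windTurbine n).dist i j) ∧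
    (∀ i : Fin n, ∑ j : Fin n, (windTurbine n).dist i j ≤ 2 * n - 3) ∧
    (2 * (n : ℝ) - 3) / ((n : ℝ) - 1) < 2 := by
  have hn1 : 1 ≤ n := by omega
  have hc := wt_connected (n := n) hn1
  set G := windTurbine n with hG
  set v0 : Fin n := ⟨0, by omega⟩ with hv0
  have hv0c : (v0 : ℕ) = 0 := rfl
  have hd0 : ∀ j : Fin n, j ≠ v0 → G.dist v0 j = 1 := fun j h =>
    (SimpleGraph.dist_eq_one_iff_adj).mpr (wt_adj_zero rfl (Ne.symm h))
  have hd0' : ∀ j : Fin n, j ≠ v0 → G.dist j v0 = 1 := by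
    intro j h; rw [SimpleGraph.dist_comm]; exact hd0 j h
  have card_univ : (Finset.univ : Finset (Fin n)).card = n := by simp
  -- sum for vertex 0
  have S0 : ∑ j : Fin n, G.dist v0 j = n - 1 := by
    rw [← Finset.add_sum_erase _ _ (Finset.mem_univ v0), SimpleGraph.dist_self]
    rw [Finset.sum_congr rfl (fun x hx => hd0 x (Finset.ne_of_mem_erase hx))]
    simp [Finset.card_erase_of_mem]
  refine ⟨S0, ?_, ?_, ?_, ?_⟩
  · -- vertices ≥ 3
    intro b hb
    have hbne : b ≠ v0 := by intro h; rw [h] at hb; simp [hv0c] at hb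
    have hvmem : v0 ∈ Finset.univ.erase b := Finset.mem_erase.mpr ⟨Ne.symm hbne, Finset.mem_univ _⟩
    rw [← Finset.add_sum_erase _ _ (Finset.mem_univ b), SimpleGraph.dist_self,
      ← Finset.add_sum_erase _ _ hvmem, hd0' b hbne]
    have : ∀ x ∈ (Finset.univ.erase b).erase v0, G.dist b x = 2 := by
      intro x hx
      obtain ⟨hx1, hx2⟩ := Finset.mem_erase.mp hx
      have hx3 := Finset.ne_of_mem_erase hx2
      refine wt_dist_eq_two hn1 hb ?_ (Ne.symm hx3)
      intro h
      exact hx1 (Fin.ext h)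
    rw [Finset.sum_congr rfl this, Finset.sum_const, smul_eq_mul]
    rw [Finset.card_erase_of_mem hvmem, Finset.card_erase_of_mem (Finset.mem_univ b), card_univ]
    omega
  · -- lower bound
    intro i
    calc n - 1 = (Finset.univ.erase i).card := by
          rw [Finset.card_erase_of_mem (Finset.mem_univ i), card_univ]
      _ = ∑ _x ∈ Finset.univ.erase i, 1 := by simp
      _ ≤ ∑ x ∈ Finset.univ.erase i, G.dist i x := by
          refine Finset.sum_le_sum fun x hx => ?_
          exact hc.pos_dist_of_ne (Ne.symm (Finset.ne_of_mem_erase hx))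
      _ ≤ ∑ x : Fin n, G.dist i x := Finset.sum_le_sum_of_subset (Finset.subset_univ _)
  · -- upper bound
    intro i
    by_cases hi : i = v0
    · rw [hi, S0]; omega
    · have hvmem : v0 ∈ Finset.univ.erase i := Finset.mem_erase.mpr ⟨Ne.symm hi, Finset.mem_univ _⟩
      rw [← Finset.add_sum_erase _ _ (Finset.mem_univ i), SimpleGraph.dist_self,
        ← Finset.add_sum_erase _ _ hvmem, hd0' i hi]
      have hle : ∑ x ∈ (Finset.univ.erase i).erase v0, G.dist i x ≤
          ∑ _x ∈ (Finset.univ.erase i).erase v0, 2 :=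
        Finset.sum_le_sum fun x _ => wt_dist_le_two hn1 i x
      have hcard : ((Finset.univ.erase i).erase v0).card = n - 2 := by
        rw [Finset.card_erase_of_mem hvmem, Finset.card_erase_of_mem (Finset.mem_univ i),
          card_univ]
        omega
      rw [Finset.sum_const, hcard, smul_eq_mul] at hle
      omega
  · -- ratio < 2
    have h1 : (0 : ℝ) < (n : ℝ) - 1 := by
      have : (4 : ℝ) ≤ n := by exact_mod_cast hn
      linarith
    rw [div_lt_iff₀ h1]
    linarith
end

section
/- In the general wind turbine graph on n vertices with parameter k (1 ≤ k ≤ (n-1)/2), the minimum vertex cost is n-1 (attained by vertices 0,...,k-1), the maximum vertex cost is 2(n-1)-k (attained by vertices 2k+1,...,n-1 when n > 2k+1), and the inequality ratio is 2 - k/(n-1). -/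
def genWindTurbine (n k : ℕ) : SimpleGraph (Fin n) :=
  SimpleGraph.fromRel (fun i j =>
    ((i : ℕ) ≤ k ∧ (i : ℕ) + 1 ≤ (j : ℕ) ∧ (j : ℕ) ≤ (i : ℕ) + k) ∨
    (k + 1 ≤ (i : ℕ) ∧ (i : ℕ) ≤ 2 * k - 1 ∧
      ((j : ℕ) ≤ (i : ℕ) - k - 1 ∨ ((i : ℕ) + 1 ≤ (j : ℕ) ∧ (j : ℕ) ≤ 2 * k))) ∨
    (2 * k ≤ (i : ℕ) ∧ (j : ℕ) < k))

section Aux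

variable {n k : ℕ}

lemma gwt_adj_of_lt (hk : 1 ≤ k) {i j : Fin n} (hi : (i : ℕ) < k) (hij : i ≠ j) :
    (genWindTurbine n k).Adj i j := by
  have hij' : (i : ℕ) ≠ (j : ℕ) := fun h => hij (Fin.ext h)
  rw [genWindTurbine, SimpleGraph.fromRel_adj]
  exact ⟨hij, by omega⟩

lemma gwt_not_adj (hk : 1 ≤ k) {i j : Fin n} (hi : 2 * k + 1 ≤ (i : ℕ)) (hj : k ≤ (j : ℕ)) :
    ¬ (genWindTurbine n k).Adj i j := by
  rw [genWindTurbine, SimpleGraph.fromRel_adj]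
  rintro ⟨-, h⟩
  omega

lemma gwt_reach (hk : 1 ≤ k) (hkn : 2 * k + 1 ≤ n) (i j : Fin n) :
    (genWindTurbine n k).Reachable i j := by
  by_cases hij : i = j
  · subst hij; rfl
  by_cases hi : (i : ℕ) < k
  · exact (gwt_adj_of_lt hk hi hij).reachable
  by_cases hj : (j : ℕ) < k
  · exact ((gwt_adj_of_lt hk hj (Ne.symm hij)).symm).reachable
  · have hn : 0 < n := by omega
    set z : Fin n := ⟨0, hn⟩ with hz
    have hzk : (z : ℕ) < k := hk
    have h1 : (genWindTurbine n k).Adj i z :=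
      ((gwt_adj_of_lt hk hzk (by intro h; apply hi; rw [← h]; exact hk))).symm
    have h2 : (genWindTurbine n k).Adj z j :=
      gwt_adj_of_lt hk hzk (by intro h; apply hj; rw [← h]; exact hk)
    exact h1.reachable.trans h2.reachable

lemma gwt_dist_le_two (hk : 1 ≤ k) (hkn : 2 * k + 1 ≤ n) (i j : Fin n) :
    (genWindTurbine n k).dist i j ≤ 2 := by
  by_cases hij : i = j
  · subst hij; simp [SimpleGraph.dist_self]
  by_cases hi : (i : ℕ) < k
  · have := SimpleGraph.dist_eq_one_iff_adj.mpr (gwt_adj_of_lt hk hi hij)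
    omega
  by_cases hj : (j : ℕ) < k
  · have := SimpleGraph.dist_eq_one_iff_adj.mpr ((gwt_adj_of_lt hk hj (Ne.symm hij)).symm)
    omega
  · have hn : 0 < n := by omega
    set z : Fin n := ⟨0, hn⟩ with hz
    have hzk : (z : ℕ) < k := hk
    have h1 : (genWindTurbine n k).Adj i z :=
      ((gwt_adj_of_lt hk hzk (by intro h; apply hi; rw [← h]; exact hk))).symm
    have h2 : (genWindTurbine n k).Adj z j :=
      gwt_adj_of_lt hk hzk (by intro h; apply hj; rw [← h]; exact hk)
    have : (genWindTurbine n k).dist i j ≤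
        (SimpleGraph.Walk.cons h1 (SimpleGraph.Walk.cons h2 SimpleGraph.Walk.nil)).length :=
      SimpleGraph.dist_le _
    simpa using this

lemma sum_range_ite (m : ℕ) (h : k ≤ m) :
    ∑ j ∈ Finset.range m, (if j < k then (1 : ℕ) else 2) = 2 * m - k := by
  induction m with
  | zero => simp only [Finset.range_zero, Finset.sum_empty]; omega
  | succ m ih =>
    rw [Finset.sum_range_succ]
    rcases Nat.lt_or_ge m k with hm | hm
    · have hsum : ∑ j ∈ Finset.range m, (if j < k then (1 : ℕ) else 2)
          = ∑ j ∈ Finset.range m, 1 :=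
        Finset.sum_congr rfl (fun j hj => by
          rw [Finset.mem_range] at hj; rw [if_pos (by omega)])
      rw [if_pos hm, hsum, Finset.sum_const, smul_eq_mul, Finset.card_range]
      omega
    · rw [if_neg (by omega), ih hm]
      omega

lemma sum_univ_ite (h : k ≤ n) :
    ∑ j : Fin n, (if (j : ℕ) < k then (1 : ℕ) else 2) = 2 * n - k := by
  rw [Fin.sum_univ_eq_sum_range (fun j => if j < k then (1 : ℕ) else 2)]
  exact sum_range_ite n h

lemma sum_indicator (i : Fin n) :
    ∑ j : Fin n, (if j = i then (0 : ℕ) else 1) = n - 1 := by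
  rw [← Finset.sum_erase_add _ _ (Finset.mem_univ i), if_pos rfl, add_zero]
  rw [Finset.sum_congr rfl (fun j hj => if_neg (Finset.ne_of_mem_erase hj)),
    Finset.sum_const, smul_eq_mul, mul_one,
    Finset.card_erase_of_mem (Finset.mem_univ i), Finset.card_univ, Fintype.card_fin]

lemma sum_f (hkn : 2 * k + 1 ≤ n) (i : Fin n) (hi : k ≤ (i : ℕ)) :
    ∑ j : Fin n, (if j = i then (0 : ℕ) else if (j : ℕ) < k then 1 else 2)
      = 2 * (n - 1) - k := by
  have h1 : ∑ j ∈ Finset.univ.erase i, (if (j : ℕ) < k then (1 : ℕ) else 2)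
      + (if (i : ℕ) < k then (1 : ℕ) else 2) = 2 * n - k := by
    rw [Finset.sum_erase_add _ _ (Finset.mem_univ i)]
    exact sum_univ_ite (by omega)
  rw [if_neg (by omega)] at h1
  have h2 : ∑ j : Fin n, (if j = i then (0 : ℕ) else if (j : ℕ) < k then 1 else 2)
      = ∑ j ∈ Finset.univ.erase i, (if (j : ℕ) < k then (1 : ℕ) else 2) := by
    rw [← Finset.sum_erase_add _ _ (Finset.mem_univ i), if_pos rfl, add_zero]
    exact Finset.sum_congr rfl fun j hj => if_neg (Finset.ne_of_mem_erase hj)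
  omega

end Aux

/-- in the general wind turbine graph on `n` vertices with parameter `k`
(`1 ≤ k ≤ (n-1)/2`), the minimum vertex cost is `n-1` (attained by vertices
`0,…,k-1`), the maximum vertex cost is `2(n-1)-k` (attained by vertices `2k+1,…,n-1`
when `n > 2k+1`), and the inequality ratio is `2 - k/(n-1)`. -/
theorem genWindTurbine_costs (n k : ℕ) (hk : 1 ≤ k) (hkn : 2 * k + 1 ≤ n) :
    (∀ i : Fin n, (i : ℕ) < k → ∑ j : Fin n, (genWindTurbine n k).dist i j = n - 1) ∧
    (∀ i : Fin n, 2 * k + 1 ≤ (i : ℕ) →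
      ∑ j : Fin n, (genWindTurbine n k).dist i j = 2 * (n - 1) - k) ∧
    (∀ i : Fin n, n - 1 ≤ ∑ j : Fin n, (genWindTurbine n k).dist i j) ∧
    (∀ i : Fin n, ∑ j : Fin n, (genWindTurbine n k).dist i j ≤ 2 * (n - 1) - k) ∧
    (2 * ((n : ℝ) - 1) - k) / ((n : ℝ) - 1) = 2 - (k : ℝ) / ((n : ℝ) - 1) := by
  have hub_sum : ∀ i : Fin n, (i : ℕ) < k →
      ∑ j : Fin n, (genWindTurbine n k).dist i j = n - 1 := by
    intro i hi
    have hd : ∀ j : Fin n, (genWindTurbine n k).dist i j = if j = i then 0 else 1 := by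
      intro j
      by_cases h : j = i
      · subst h; simp [SimpleGraph.dist_self]
      · rw [if_neg h]
        exact SimpleGraph.dist_eq_one_iff_adj.mpr (gwt_adj_of_lt hk hi (Ne.symm h))
    rw [Finset.sum_congr rfl (fun j _ => hd j)]
    exact sum_indicator i
  refine ⟨hub_sum, ?_, ?_, ?_, ?_⟩
  · -- far vertices
    intro i hi
    have hd : ∀ j : Fin n, (genWindTurbine n k).dist i j
        = if j = i then 0 else if (j : ℕ) < k then 1 else 2 := by
      intro j
      by_cases h : j = i
      · subst h; simp [SimpleGraph.dist_self]
      rw [if_neg h]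
      by_cases hj : (j : ℕ) < k
      · rw [if_pos hj]
        exact SimpleGraph.dist_eq_one_iff_adj.mpr
          ((gwt_adj_of_lt hk hj h).symm)
      · rw [if_neg hj]
        have hle := gwt_dist_le_two hk hkn i j
        have hne1 : (genWindTurbine n k).dist i j ≠ 1 := by
          intro hd1
          exact gwt_not_adj hk hi (by omega) (SimpleGraph.dist_eq_one_iff_adj.mp hd1)
        have hpos : 0 < (genWindTurbine n k).dist i j :=
          (gwt_reach hk hkn i j).pos_dist_of_ne (fun hij => h hij.symm)
        omega
    rw [Finset.sum_congr rfl (fun j _ => hd j)]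
    exact sum_f hkn i (by omega)
  · -- lower bound
    intro i
    calc n - 1 = ∑ j : Fin n, (if j = i then (0 : ℕ) else 1) := (sum_indicator i).symm
    _ ≤ ∑ j : Fin n, (genWindTurbine n k).dist i j := by
        refine Finset.sum_le_sum fun j _ => ?_
        by_cases h : j = i
        · simp [h]
        · rw [if_neg h]
          exact (gwt_reach hk hkn i j).pos_dist_of_ne (fun hij => h hij.symm)
  · -- upper bound
    intro i
    by_cases hi : (i : ℕ) < k
    · rw [hub_sum i hi]; omega
    · push_neg at hi
      calc ∑ j : Fin n, (genWindTurbine n k).dist i j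
          ≤ ∑ j : Fin n, (if j = i then (0 : ℕ) else if (j : ℕ) < k then 1 else 2) := by
            refine Finset.sum_le_sum fun j _ => ?_
            by_cases h : j = i
            · subst h; simp [SimpleGraph.dist_self]
            rw [if_neg h]
            by_cases hj : (j : ℕ) < k
            · rw [if_pos hj]
              have := SimpleGraph.dist_eq_one_iff_adj.mpr ((gwt_adj_of_lt hk hj h).symm)
              omega
            · rw [if_neg hj]
              exact gwt_dist_le_two hk hkn i j
      _ = 2 * (n - 1) - k := sum_f hkn i hi
  · -- real ratio
    have hn : (n : ℝ) - 1 ≠ 0 := by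
      have : (3 : ℝ) ≤ n := by exact_mod_cast (by omega : 3 ≤ n)
      linarith
    field_simp
end

section
/- The general wind turbine graph on n vertices with parameter k (1 ≤ k ≤ (n-1)/2) has social cost 2(n² - n - kn), which equals n(n-1) + 2n((n-1)/2 - k), the minimum possible social cost for any graph on n vertices with nk edges; hence the wind turbine strategy is socially efficient. -/
open Finset

namespace SimpleGraph

variable {V : Type*} {G : SimpleGraph V}

lemma reachable_of_forall_adj {c : V} (hc : ∀ v, v ≠ c → G.Adj c v) (v : V) :
    G.Reachable c v := by
  obtain rfl | hv := eq_or_ne v c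
  · rfl
  · exact (hc v hv).reachable

lemma connected_of_forall_adj {c : V} (hc : ∀ v, v ≠ c → G.Adj c v) :
    G.Connected :=
  (connected_iff_exists_forall_reachable G).2 ⟨c, reachable_of_forall_adj hc⟩

lemma dist_le_two_of_forall_adj {c : V} (hc : ∀ v, v ≠ c → G.Adj c v) (u v : V) :
    G.dist u v ≤ 2 := by
  have h1 (w : V) : G.dist c w ≤ 1 := by
    obtain rfl | hw := eq_or_ne w c
    · simp
    · exact (dist_eq_one_iff_adj.2 (hc w hw)).le
  calc G.dist u v ≤ G.dist u c + G.dist c v :=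
        (reachable_of_forall_adj hc u).symm.dist_triangle_left v
    _ ≤ 1 + 1 := by rw [dist_comm]; exact add_le_add (h1 u) (h1 v)

variable [DecidableRel G.Adj]

lemma Connected.two_le_dist_add_ite_adj (hG : G.Connected) {u v : V} (huv : u ≠ v) :
    2 ≤ G.dist u v + if G.Adj u v then 1 else 0 := by
  by_cases hadj : G.Adj u v
  · simp [hadj, dist_eq_one_iff_adj.2 hadj]
  · rw [if_neg hadj, add_zero]
    exact hG.one_lt_dist_of_ne_of_not_adj huv hadj

lemma dist_add_ite_adj_le_two {u v : V} (h : G.dist u v ≤ 2) :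
    G.dist u v + (if G.Adj u v then 1 else 0) ≤ 2 := by
  by_cases hadj : G.Adj u v
  · simp [hadj, dist_eq_one_iff_adj.2 hadj]
  · simpa only [hadj, if_false, add_zero]

variable [Fintype V]

lemma sum_ite_adj_eq_degree (u : V) : ∑ v, (if G.Adj u v then 1 else 0) = G.degree u := by
  rw [sum_boole, ← card_neighborFinset_eq_degree, neighborFinset_eq_filter, Nat.cast_id]

lemma sum_dist_add_degree_eq_sum_erase [DecidableEq V] (u : V) :
    ∑ v, G.dist u v + G.degree u =
      ∑ v ∈ univ.erase u, (G.dist u v + if G.Adj u v then 1 else 0) := by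
  rw [← sum_ite_adj_eq_degree, ← sum_add_distrib, ← add_sum_erase _ _ (mem_univ u)]
  simp

lemma Connected.two_mul_card_sub_one_le_sum_dist_add_degree (hG : G.Connected) (u : V) :
    2 * (Fintype.card V - 1) ≤ ∑ v, G.dist u v + G.degree u := by
  classical
  rw [sum_dist_add_degree_eq_sum_erase, ← card_univ, ← card_erase_of_mem (mem_univ u),
    mul_comm, ← smul_eq_mul, ← sum_const]
  exact sum_le_sum fun v hv => hG.two_le_dist_add_ite_adj (ne_of_mem_erase hv).symm

lemma Connected.sum_dist_add_degree_eq_of_dist_le_two (hG : G.Connected) {u : V}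
    (h2 : ∀ v, G.dist u v ≤ 2) :
    ∑ v, G.dist u v + G.degree u = 2 * (Fintype.card V - 1) := by
  classical
  rw [sum_dist_add_degree_eq_sum_erase, ← card_univ, ← card_erase_of_mem (mem_univ u),
    mul_comm, ← smul_eq_mul, ← sum_const]
  exact sum_congr rfl fun v hv => le_antisymm (dist_add_ite_adj_le_two (h2 v))
    (hG.two_le_dist_add_ite_adj (ne_of_mem_erase hv).symm)

theorem Connected.two_mul_card_mul_le_sum_sum_dist_add (hG : G.Connected) :
    2 * (Fintype.card V * (Fintype.card V - 1)) ≤ ∑ u, ∑ v, G.dist u v + 2 * #G.edgeFinset := by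
  rw [← sum_degrees_eq_twice_card_edges, ← sum_add_distrib, mul_left_comm, ← smul_eq_mul,
    ← card_univ, ← sum_const]
  exact sum_le_sum fun u _ => hG.two_mul_card_sub_one_le_sum_dist_add_degree u

theorem Connected.sum_sum_dist_add_eq_of_dist_le_two (hG : G.Connected)
    (h2 : ∀ u v, G.dist u v ≤ 2) :
    ∑ u, ∑ v, G.dist u v + 2 * #G.edgeFinset = 2 * (Fintype.card V * (Fintype.card V - 1)) := by
  rw [← sum_degrees_eq_twice_card_edges, ← sum_add_distrib, mul_left_comm, ← smul_eq_mul,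
    ← card_univ, ← sum_const]
  exact sum_congr rfl fun u _ => hG.sum_dist_add_degree_eq_of_dist_le_two (h2 u)

end SimpleGraph

lemma genWindTurbine_adj_iff {n k : ℕ} {i j : Fin n} :
    (genWindTurbine n k).Adj i j ↔
      (i : ℕ) ≠ j ∧ ((i : ℕ) < k ∨ (j : ℕ) < k ∨ ((i : ℕ) ≤ 2 * k ∧ (j : ℕ) ≤ 2 * k)) := by
  simp only [genWindTurbine, SimpleGraph.fromRel_adj, ne_eq, ← Fin.val_eq_val]
  omega

instance {n k : ℕ} : DecidableRel (genWindTurbine n k).Adj :=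
  fun _ _ => decidable_of_iff _ genWindTurbine_adj_iff.symm

lemma genWindTurbine_zero_adj {n k : ℕ} (hk : 1 ≤ k) (hkn : 2 * k + 1 ≤ n) (v : Fin n)
    (hv : v ≠ ⟨0, by omega⟩) : (genWindTurbine n k).Adj ⟨0, by omega⟩ v :=
  genWindTurbine_adj_iff.2 ⟨fun h => hv (Fin.ext h.symm), Or.inl hk⟩

lemma genWindTurbine_degree {n k : ℕ} (hkn : 2 * k + 1 ≤ n) (i : Fin n) :
    (genWindTurbine n k).degree i =
      if (i : ℕ) < k then n - 1 else if (i : ℕ) ≤ 2 * k then 2 * k else k := by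
  rw [← SimpleGraph.sum_ite_adj_eq_degree]
  simp only [genWindTurbine_adj_iff]
  rw [Fin.sum_univ_eq_sum_range
      fun j => if (i : ℕ) ≠ j ∧ ((i : ℕ) < k ∨ j < k ∨ ((i : ℕ) ≤ 2 * k ∧ j ≤ 2 * k)) then 1 else 0,
    sum_boole, Nat.cast_id]
  have hi := i.isLt
  split_ifs with _ hle
  · convert card_erase_of_mem (mem_range.2 hi) using 2
    · ext; simp only [mem_filter, mem_range, mem_erase]; omega
    · simp
  · convert card_erase_of_mem (mem_range.2 (Nat.lt_succ_of_le hle)) using 2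
    · ext; simp only [mem_filter, mem_range, mem_erase]; omega
    · simp
  · convert card_range k using 2
    ext; simp only [mem_filter, mem_range]; omega

lemma sum_degree_genWindTurbine {n k : ℕ} (hkn : 2 * k + 1 ≤ n) :
    ∑ i, (genWindTurbine n k).degree i = 2 * (n * k) := by
  set d : ℕ → ℕ := fun i => if i < k then n - 1 else if i ≤ 2 * k then 2 * k else k
  have hhub : ∑ i ∈ range k, d i = #(range k) * (n - 1) :=
    sum_const_nat fun i hi => if_pos (mem_range.1 hi)
  have hclique : ∑ i ∈ Ico k (2 * k + 1), d i = #(Ico k (2 * k + 1)) * (2 * k) :=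
    sum_const_nat fun i hi => by
      rw [mem_Ico] at hi; exact (if_neg (by omega)).trans (if_pos (by omega))
  have hleaves : ∑ i ∈ Ico (2 * k + 1) n, d i = #(Ico (2 * k + 1) n) * k :=
    sum_const_nat fun i hi => by
      rw [mem_Ico] at hi; exact (if_neg (by omega)).trans (if_neg (by omega))
  rw [sum_congr rfl fun i _ => genWindTurbine_degree hkn i, Fin.sum_univ_eq_sum_range d n,
    ← sum_range_add_sum_Ico _ hkn, ← sum_range_add_sum_Ico _ (by omega : k ≤ 2 * k + 1),
    hhub, hclique, hleaves, card_range, Nat.card_Ico, Nat.card_Ico]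
  obtain ⟨m, rfl⟩ := Nat.exists_eq_add_of_le hkn
  rw [show 2 * k + 1 + m - 1 = 2 * k + m by omega, show 2 * k + 1 - k = k + 1 by omega,
    Nat.add_sub_cancel_left]
  ring

lemma card_edgeFinset_genWindTurbine {n k : ℕ} (hkn : 2 * k + 1 ≤ n) :
    #(genWindTurbine n k).edgeFinset = n * k := by
  have := (genWindTurbine n k).sum_degrees_eq_twice_card_edges
  rw [sum_degree_genWindTurbine hkn] at this
  omega

/-- the general wind turbine graph on `n` vertices with parameter `k`
(`1 ≤ k ≤ (n-1)/2`) has social cost `2(n² - n - kn)`, which equals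
`n(n-1) + 2n((n-1)/2 - k)`, the minimum possible social cost of any connected graph on
`n` vertices with `nk` edges; hence the wind turbine strategy is socially efficient. -/
theorem genWindTurbine_efficient (n k : ℕ) (hk : 1 ≤ k) (hkn : 2 * k + 1 ≤ n) :
    (∑ i : Fin n, ∑ j : Fin n, ((genWindTurbine n k).dist i j : ℝ))
      = 2 * ((n : ℝ) ^ 2 - n - k * n) ∧
    2 * ((n : ℝ) ^ 2 - (n : ℝ) - (k : ℝ) * n)
      = (n : ℝ) * ((n : ℝ) - 1) + 2 * (n : ℝ) * (((n : ℝ) - 1) / 2 - (k : ℝ)) ∧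
    (∀ H : SimpleGraph (Fin n), H.Connected → H.edgeSet.ncard = n * k →
      2 * ((n : ℝ) ^ 2 - n - k * n) ≤ ∑ i : Fin n, ∑ j : Fin n, (H.dist i j : ℝ)) := by
  classical
  have hn : ((n - 1 : ℕ) : ℝ) = n - 1 := Nat.cast_pred (by omega)
  refine ⟨?_, by ring, fun H hH hm => ?_⟩
  · have hc := genWindTurbine_zero_adj hk hkn
    have hcost := (SimpleGraph.connected_of_forall_adj hc).sum_sum_dist_add_eq_of_dist_le_two
      (SimpleGraph.dist_le_two_of_forall_adj hc)
    rw [card_edgeFinset_genWindTurbine hkn, Fintype.card_fin] at hcost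
    have hcost' := congrArg (Nat.cast : ℕ → ℝ) hcost
    push_cast [hn] at hcost'
    linarith
  · rw [← SimpleGraph.coe_edgeFinset, Set.ncard_coe_finset] at hm
    have hcost := hH.two_mul_card_mul_le_sum_sum_dist_add
    rw [hm, Fintype.card_fin] at hcost
    have hcost' := (Nat.cast_le (α := ℝ)).2 hcost
    push_cast [hn] at hcost'
    linarith
end
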